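/- arXiv:2205.15798 — 5 statements merged into one kernel-verified Lean document; each statement's English description precedes it below -/
import Mathlib

section
/- Let Z : (Fin N → ℝ) → ℂ be the diagonal-source partition function Z(j) = exp(−iV Σ_k j_k E_k/λ) · A(z − (V/ν)·j) · W(t⁰ + j). Then for each a ∈ Fin N the 1-point function G_{|a|} := (1/(iV)) · (∂Z/∂j_a)(0)/Z(0) equals −E_a/λ − (λ/(iV)) · Σ_{i≠a} 1/(E_a² − E_i²) − (1/(iν)) · (∂_a A)(z)/A(z), where ∂_a denotes the partial derivative in the a-th coordinate. -/
/-!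
Each factor of `Z` is nonvanishing at `j = 0`, so `∂_a Z(0) / Z(0)` is the sum of the logarithmic
derivatives of the three factors. The exponential contributes `-iV E_a / λ`, the Airy factor
`-(V/ν) ∂_a A(z) / A(z)` by the chain rule, and `W = 1 / ∏_{l<j} (t_j - t_l)` contributes
`-∑_{i≠a} 1 / (t⁰_a - t⁰_i)`, since only the pairs containing `a` depend on `t_a`.
With `t⁰_a - t⁰_i = (E_a² - E_i²) / λ` this is the claimed formula.
-/

noncomputable section

open Finset

/-- Partial derivative of `F` in the `k`-th coordinate. -/
def pd {N : ℕ} (k : Fin N) (F : (Fin N → ℝ) → ℂ) : (Fin N → ℝ) → ℂ :=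
  fun x => fderiv ℝ F x (Pi.single k 1)

/-- `W(t) = 1 / ∏_{l<j} (t_j − t_l)`. -/
def Wfun {N : ℕ} (t : Fin N → ℝ) : ℂ :=
  ((∏ q ∈ Finset.univ.filter (fun q : Fin N × Fin N => q.1 < q.2),
      (t q.2 - t q.1) : ℝ) : ℂ)⁻¹

section LogarithmicDerivative

variable {𝕜 E 𝔸 : Type*} [NontriviallyNormedField 𝕜] [NormedAddCommGroup E] [NormedSpace 𝕜 E]
  [NormedField 𝔸] [NormedAlgebra 𝕜 𝔸] {x : E}

theorem fderiv_mul_apply_div_mul {f g : E → 𝔸} (hf : DifferentiableAt 𝕜 f x)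
    (hg : DifferentiableAt 𝕜 g x) (hfx : f x ≠ 0) (hgx : g x ≠ 0) (v : E) :
    fderiv 𝕜 (fun y => f y * g y) x v / (f x * g x) =
      fderiv 𝕜 f x v / f x + fderiv 𝕜 g x v / g x := by
  rw [fderiv_fun_mul hf hg]
  simp only [add_apply, smul_apply, smul_eq_mul]
  field_simp
  ring

theorem fderiv_prod_apply_div_prod {ι : Type*} (s : Finset ι) {f : ι → E → 𝔸}
    (hf : ∀ i ∈ s, DifferentiableAt 𝕜 (f i) x) (hfx : ∀ i ∈ s, f i x ≠ 0) (v : E) :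
    fderiv 𝕜 (fun y => ∏ i ∈ s, f i y) x v / ∏ i ∈ s, f i x =
      ∑ i ∈ s, fderiv 𝕜 (f i) x v / f i x := by
  classical
  induction s using Finset.induction_on with
  | empty => simp
  | insert i s hi ih =>
    simp only [forall_mem_insert] at hf hfx
    have hprod : DifferentiableAt 𝕜 (fun y => ∏ j ∈ s, f j y) x :=
      (HasFDerivAt.finsetProd fun j hj => (hf.2 j hj).hasFDerivAt).differentiableAt
    simp only [prod_insert hi, sum_insert hi]
    rw [fderiv_mul_apply_div_mul hf.1 hprod hfx.1 (prod_ne_zero_iff.2 hfx.2), ih hf.2 hfx.2]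

theorem fderiv_inv_apply_div_inv {f : E → 𝔸} (hf : DifferentiableAt 𝕜 f x) (hfx : f x ≠ 0)
    (v : E) : fderiv 𝕜 (fun y => (f y)⁻¹) x v / (f x)⁻¹ = -(fderiv 𝕜 f x v / f x) := by
  rw [fderiv_fun_comp x (differentiableAt_inv hfx) hf, fderiv_inv' hfx]
  simp only [ContinuousLinearMap.comp_apply, neg_apply, ContinuousLinearMap.mulLeftRight_apply]
  field_simp

end LogarithmicDerivative

theorem fderiv_cexp_apply_div_cexp {𝕜 E : Type*} [NontriviallyNormedField 𝕜]
    [NormedAlgebra 𝕜 ℂ] [NormedAddCommGroup E] [NormedSpace 𝕜 E] {f : E → ℂ} {x : E}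
    (hf : DifferentiableAt 𝕜 f x) (v : E) :
    fderiv 𝕜 (fun y => Complex.exp (f y)) x v / Complex.exp (f x) = fderiv 𝕜 f x v := by
  rw [hf.hasFDerivAt.cexp.fderiv, smul_apply, smul_eq_mul,
    mul_div_cancel_left₀ _ (Complex.exp_ne_zero _)]

/-- Only the pairs `(i, a)` with `i < a` and `(a, j)` with `a < j` contribute, each giving
`1 / (u a - u i)` resp. `1 / (u a - u j)`. -/
theorem sum_filter_lt_single_sub_div_sub {ι K : Type*} [Fintype ι] [LinearOrder ι] [Field K]
    (u : ι → K) (a : ι) :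
    ∑ q ∈ univ.filter (fun q : ι × ι => q.1 < q.2),
        ((Pi.single a 1 : ι → K) q.2 - (Pi.single a 1 : ι → K) q.1) / (u q.2 - u q.1) =
      ∑ i ∈ univ.filter (fun i => i ≠ a), 1 / (u a - u i) := by
  have hsplit : ∀ i j : ι,
      (if i < j then ((Pi.single a 1 : ι → K) j - (Pi.single a 1 : ι → K) i) / (u j - u i)
        else 0) =
      (if j = a then (if i < a then 1 / (u a - u i) else 0) else 0) +
        (if i = a then (if a < j then 1 / (u a - u j) else 0) else 0) := by
    intro i j
    by_cases hi : i = a <;> by_cases hj : j = a <;> subst_vars <;>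
      simp [*, neg_div, ← inv_neg]
  rw [sum_filter, Fintype.sum_prod_type]
  simp only [hsplit, sum_add_distrib, sum_ite_eq', mem_univ, if_true]
  rw [sum_comm]
  simp only [sum_ite_eq', mem_univ, if_true, ← sum_add_distrib, sum_filter]
  refine sum_congr rfl fun i _ => ?_
  rcases lt_trichotomy i a with h | rfl | h
  · simp [h, h.ne, not_lt_of_gt h]
  · simp
  · simp [h, h.ne', not_lt_of_gt h]

section Coordinates

variable {N : ℕ}

theorem pd_ofReal_of_hasFDerivAt {g : (Fin N → ℝ) → ℝ} {g' : (Fin N → ℝ) →L[ℝ] ℝ}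
    {x : Fin N → ℝ} (hg : HasFDerivAt g g' x) (a : Fin N) :
    pd a (fun s => (g s : ℂ)) x = g' (Pi.single a 1) :=
  congrArg (· (Pi.single a 1)) (Complex.ofRealCLM.hasFDerivAt.comp x hg).fderiv

theorem pd_cexp_sum_div_cexp (c : ℂ) (w : Fin N → ℝ) (d : ℝ) (a : Fin N) (x : Fin N → ℝ) :
    pd a (fun j => Complex.exp (c * ((∑ k, j k * w k / d : ℝ) : ℂ))) x /
        Complex.exp (c * ((∑ k, x k * w k / d : ℝ) : ℂ)) = c * (w a / d : ℝ) := by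
  simp_rw [mul_div_assoc]
  have hlin := pd_ofReal_of_hasFDerivAt
    (HasFDerivAt.fun_sum (u := univ) fun k _ => (hasFDerivAt_apply k x).mul_const (w k / d)) a
  rw [pd] at hlin ⊢
  rw [fderiv_cexp_apply_div_cexp (by fun_prop), fderiv_const_mul (by fun_prop), smul_apply, hlin]
  simp [Pi.single_apply]

theorem pd_comp_sub_mul (F : (Fin N → ℝ) → ℂ) (z : Fin N → ℝ) (c : ℝ) (a : Fin N) :
    pd a (fun j => F (fun k => z k - c * j k)) 0 = -(c : ℂ) * pd a F z := by
  have h := fderiv_comp_smul (𝕜 := ℝ) (f := fun y => F (z + y)) (x := (0 : Fin N → ℝ)) (-c)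
  simp only [smul_zero, fderiv_comp_add_left, add_zero] at h
  have hfun : (fun j => F (fun k => z k - c * j k)) = fun j => F (z + (-c) • j) := by
    funext j; congr 1; funext k; simp [sub_eq_add_neg]
  rw [pd, pd, hfun, h]
  simp [Complex.real_smul]

theorem pd_comp_add (F : (Fin N → ℝ) → ℂ) (t : Fin N → ℝ) (a : Fin N) :
    pd a (fun j => F (fun k => t k + j k)) 0 = pd a F t := by
  have h := fderiv_comp_add_left (𝕜 := ℝ) (f := F) (x := (0 : Fin N → ℝ)) t
  rw [add_zero] at h
  exact congrArg (· (Pi.single a 1)) h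

end Coordinates

section Vandermonde

variable {N : ℕ} {t : Fin N → ℝ}

theorem Wfun_eq_inv_prod (t : Fin N → ℝ) :
    Wfun t = (∏ q ∈ univ.filter (fun q : Fin N × Fin N => q.1 < q.2),
      ((t q.2 - t q.1 : ℝ) : ℂ))⁻¹ := by
  simp [Wfun]

theorem ofReal_sub_ne_zero_of_injective (ht : Function.Injective t) {q : Fin N × Fin N}
    (hq : q ∈ univ.filter (fun q : Fin N × Fin N => q.1 < q.2)) :
    ((t q.2 - t q.1 : ℝ) : ℂ) ≠ 0 := by
  rw [Complex.ofReal_ne_zero, sub_ne_zero]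
  exact ht.ne (mem_filter.1 hq).2.ne'

theorem Wfun_ne_zero (ht : Function.Injective t) : Wfun t ≠ 0 := by
  rw [Wfun_eq_inv_prod]
  exact inv_ne_zero (prod_ne_zero_iff.2 fun q hq => ofReal_sub_ne_zero_of_injective ht hq)

theorem differentiableAt_Wfun (ht : Function.Injective t) : DifferentiableAt ℝ Wfun t := by
  rw [show Wfun = _ from funext Wfun_eq_inv_prod]
  exact DifferentiableAt.inv (by fun_prop)
    (prod_ne_zero_iff.2 fun q hq => ofReal_sub_ne_zero_of_injective ht hq)

theorem pd_Wfun_div_Wfun (ht : Function.Injective t) (a : Fin N) :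
    pd a Wfun t / Wfun t = -∑ i ∈ univ.filter (fun i => i ≠ a), ((1 / (t a - t i) : ℝ) : ℂ) := by
  have hpd : ∀ q : Fin N × Fin N,
      pd a (fun s => ((s q.2 - s q.1 : ℝ) : ℂ)) t =
        ((Pi.single a 1 : Fin N → ℝ) q.2 - (Pi.single a 1 : Fin N → ℝ) q.1 : ℝ) := fun q =>
    pd_ofReal_of_hasFDerivAt ((hasFDerivAt_apply q.2 t).sub (hasFDerivAt_apply q.1 t)) a
  -- the holes keep the elaborator from guessing the factors from the nonvanishing hypotheses
  rw [Wfun_eq_inv_prod t, show Wfun = _ from funext Wfun_eq_inv_prod, pd,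
    fderiv_inv_apply_div_inv ?diff ?ne, fderiv_prod_apply_div_prod _ ?diffs ?nes]
  case diff => fun_prop
  case ne => exact prod_ne_zero_iff.2 fun q hq => ofReal_sub_ne_zero_of_injective ht hq
  case diffs => exact fun q _ => by fun_prop
  case nes => exact fun q hq => ofReal_sub_ne_zero_of_injective ht hq
  simp only [pd] at hpd
  simp only [hpd, ← Complex.ofReal_div, ← Complex.ofReal_sum]
  rw [sum_filter_lt_single_sub_div_sub]

end Vandermonde

def partitionFn {N : ℕ} (c : ℂ) (w : Fin N → ℝ) (d : ℝ) (A : (Fin N → ℝ) → ℂ)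
    (z : Fin N → ℝ) (s : ℝ) (t : Fin N → ℝ) (j : Fin N → ℝ) : ℂ :=
  Complex.exp (c * ((∑ k, j k * w k / d : ℝ) : ℂ)) * A (fun k => z k - s * j k) *
    Wfun (fun k => t k + j k)

theorem pd_partitionFn_div {N : ℕ} (c : ℂ) (w : Fin N → ℝ) (d : ℝ) {A : (Fin N → ℝ) → ℂ}
    {z : Fin N → ℝ} (hA : DifferentiableAt ℝ A z) (hAz : A z ≠ 0) (s : ℝ) {t : Fin N → ℝ}
    (ht : Function.Injective t) (a : Fin N) :
    pd a (partitionFn c w d A z s t) 0 / partitionFn c w d A z s t 0 =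
      c * (w a / d : ℝ) + -(s : ℂ) * pd a A z / A z -
        ∑ i ∈ univ.filter (fun i => i ≠ a), ((1 / (t a - t i) : ℝ) : ℂ) := by
  have hz : (fun k => z k - s * (0 : Fin N → ℝ) k) = z := by simp
  have ht0 : (fun k => t k + (0 : Fin N → ℝ) k) = t := by simp
  have hexp : DifferentiableAt ℝ
      (fun j : Fin N → ℝ => Complex.exp (c * ((∑ k, j k * w k / d : ℝ) : ℂ))) 0 := by
    fun_prop
  have hAs : DifferentiableAt ℝ (fun j : Fin N → ℝ => A (fun k => z k - s * j k)) 0 :=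
    DifferentiableAt.comp (f := fun (j : Fin N → ℝ) k => z k - s * j k) 0 (by rwa [hz]) (by fun_prop)
  have hW : DifferentiableAt ℝ (fun j : Fin N → ℝ => Wfun (fun k => t k + j k)) 0 :=
    (differentiableAt_comp_add_left t).2 (by simpa using differentiableAt_Wfun ht)
  have hAs0 : A (fun k => z k - s * (0 : Fin N → ℝ) k) ≠ 0 := by rwa [hz]
  have hW0 : Wfun (fun k => t k + (0 : Fin N → ℝ) k) ≠ 0 := by rw [ht0]; exact Wfun_ne_zero ht
  unfold partitionFn
  rw [pd, fderiv_mul_apply_div_mul (hexp.fun_mul hAs) hW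
      (mul_ne_zero (Complex.exp_ne_zero _) hAs0) hW0,
    fderiv_mul_apply_div_mul hexp hAs (Complex.exp_ne_zero _) hAs0, ← pd, ← pd, ← pd,
    pd_cexp_sum_div_cexp, pd_comp_sub_mul, pd_comp_add, hz, ht0, pd_Wfun_div_Wfun ht]
  ring

theorem one_point_function_general {N : ℕ} (lam V ν : ℝ)
    (hlam : lam ≠ 0) (hV : V ≠ 0)
    (E : Fin N → ℝ) (hE : ∀ i j, i ≠ j → E i ^ 2 ≠ E j ^ 2)
    (z t0 : Fin N → ℝ)
    (ht0 : ∀ k, t0 k = E k ^ 2 / lam)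
    (A : (Fin N → ℝ) → ℂ) (hA : ContDiff ℝ 1 A) (hAz : A z ≠ 0)
    (Z : (Fin N → ℝ) → ℂ)
    (hZ : ∀ j : Fin N → ℝ, Z j =
      Complex.exp (-Complex.I * (V : ℂ) * ((∑ k, j k * E k / lam : ℝ) : ℂ)) *
        A (fun k => z k - (V / ν) * j k) * Wfun (fun k => t0 k + j k))
    (a : Fin N) :
    1 / (Complex.I * (V : ℂ)) * pd a Z 0 / Z 0 =
      -(E a : ℂ) / (lam : ℂ) -
        (lam : ℂ) / (Complex.I * (V : ℂ)) *
          ∑ i ∈ Finset.univ.filter (fun i => i ≠ a),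
            1 / ((E a ^ 2 - E i ^ 2 : ℝ) : ℂ) -
        1 / (Complex.I * (ν : ℂ)) * pd a A z / A z := by
  have ht0_inj : Function.Injective t0 := fun i j hij => by
    by_contra hne
    exact hE i j hne (by simpa [ht0, hlam] using hij)
  have hsum : ∑ i ∈ univ.filter (fun i => i ≠ a), ((1 / (t0 a - t0 i) : ℝ) : ℂ) =
      lam * ∑ i ∈ univ.filter (fun i => i ≠ a), 1 / ((E a ^ 2 - E i ^ 2 : ℝ) : ℂ) := by
    rw [mul_sum]
    refine sum_congr rfl fun i _ => ?_
    rw [ht0, ht0, ← sub_div, one_div_div, Complex.ofReal_div, mul_one_div]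
  have hVc : (V : ℂ) ≠ 0 := Complex.ofReal_ne_zero.2 hV
  have hlamc : (lam : ℂ) ≠ 0 := Complex.ofReal_ne_zero.2 hlam
  rw [show Z = partitionFn (-Complex.I * V) E lam A z (V / ν) t0 from funext hZ, mul_div_assoc,
    pd_partitionFn_div _ _ _ (hA.differentiable one_ne_zero z) hAz _ ht0_inj, hsum]
  push_cast
  field_simp
  ring

/-- **The 1-point function `G_{|a|}` of the `Φ³₂` matrix model.**
With `Z(j) = exp(−iV Σ_k j_k E_k/λ) · A(z − (V/ν)·j) · W(t⁰ + j)`, for each `a`,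
`G_{|a|} = (1/(iV)) (∂Z/∂j_a)(0)/Z(0)
  = −E_a/λ − (λ/(iV)) Σ_{i≠a} 1/(E_a²−E_i²) − (1/(iν)) (∂_a A)(z)/A(z)`. -/
theorem one_point_function {N : ℕ} (lam V κ ν : ℝ)
    (hlam : lam ≠ 0) (hV : V ≠ 0) (hκ : κ ≠ 0) (hν : ν ^ 3 = lam * V)
    (E : Fin N → ℝ) (hE : ∀ i j, i ≠ j → E i ^ 2 ≠ E j ^ 2)
    (z t0 : Fin N → ℝ)
    (hz : ∀ k, z k = -V * E k ^ 2 / (ν * lam) + V * κ / ν)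
    (ht0 : ∀ k, t0 k = E k ^ 2 / lam)
    (A : (Fin N → ℝ) → ℂ) (hA : ContDiff ℝ 1 A) (hAz : A z ≠ 0)
    (Z : (Fin N → ℝ) → ℂ)
    (hZ : ∀ j : Fin N → ℝ, Z j =
      Complex.exp (-Complex.I * (V : ℂ) * ((∑ k, j k * E k / lam : ℝ) : ℂ)) *
        A (fun k => z k - (V / ν) * j k) * Wfun (fun k => t0 k + j k))
    (a : Fin N) :
    1 / (Complex.I * (V : ℂ)) * pd a Z 0 / Z 0 =
      -(E a : ℂ) / (lam : ℂ) -
        (lam : ℂ) / (Complex.I * (V : ℂ)) *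
          ∑ i ∈ Finset.univ.filter (fun i => i ≠ a),
            1 / ((E a ^ 2 - E i ^ 2 : ℝ) : ℂ) -
        1 / (Complex.I * (ν : ℂ)) * pd a A z / A z :=
  one_point_function_general lam V ν hlam hV E hE z t0 ht0 A hA hAz Z hZ a
end
end

section
/- With the eigenvalue-parametrized family F(p) = A(y(p)) / ∏_{t<u}(s_u(p) − s_t(p)), the 2-point function G_{|ab|} := (1/(iV)) · F′(0)/F(0) equals −(λ²/(iV)) · Σ_{i≠a} 1/((E_a² − E_i²)(E_a² − E_b²)) + (λ²/(iV)) · Σ_{i≠b} 1/((E_b² − E_i²)(E_a² − E_b²)) − (λ/(iν)) · (1/(E_a² − E_b²)) · (∂_a A)(z)/A(z) + (λ/(iν)) · (1/(E_a² − E_b²)) · (∂_b A)(z)/A(z). -/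
/-!
Write `F = (A ∘ y) / (Δ ∘ s)` with `Δ x = ∏_{t<u} (x u - x t)` the Vandermonde product, so that
`F'/F = (A ∘ y)'/(A ∘ y) - Δ'/Δ`. Logarithmic differentiation of the Vandermonde product gives
`Δ'/Δ = ∑_{t<u} (s_u' - s_t')/(s_u - s_t) = ∑_u s_u' ∑_{t≠u} 1/(s_u - s_t)`. At `p = 0` only
the two perturbed eigenvalues move, with `s_a' = -s_b' = 1/(κ²(d_a - d_b))`, so only the rows
`u = a` and `u = b` survive; likewise the chain rule only sees `∂_a A` and `∂_b A`. Substituting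
`d_u - d_t = (E_u² - E_t²)/(λκ)` gives the stated formula.
-/

noncomputable section

open Finset

section PairSums

variable {ι : Type*} [Fintype ι] [LinearOrder ι]

theorem sum_sum_ne_eq_sum_lt {M : Type*} [AddCommMonoid M] (f : ι → ι → M) :
    ∑ u, ∑ t ∈ univ.filter (· ≠ u), f u t =
      ∑ q ∈ univ.filter (fun q : ι × ι => q.1 < q.2), (f q.2 q.1 + f q.1 q.2) := by
  have hsplit (u t : ι) : (if t ≠ u then f u t else 0) =
      (if t < u then f u t else 0) + (if u < t then f u t else 0) := by
    rcases lt_trichotomy t u with h | rfl | h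
    · simp [h, h.ne, not_lt_of_gt h]
    · simp
    · simp [h, h.ne', not_lt_of_gt h]
  simp only [sum_filter, Fintype.sum_prod_type, hsplit, sum_add_distrib]
  rw [sum_comm (f := fun u t => if t < u then f u t else 0)]

theorem sum_lt_sub_div_sub {K : Type*} [Field K] (c d : ι → K) :
    ∑ q ∈ univ.filter (fun q : ι × ι => q.1 < q.2), (c q.2 - c q.1) / (d q.2 - d q.1) =
      ∑ u, c u * ∑ t ∈ univ.filter (· ≠ u), 1 / (d u - d t) := by
  simp only [mul_sum, mul_one_div]
  rw [sum_sum_ne_eq_sum_lt]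
  refine sum_congr rfl fun q _ => ?_
  rw [← neg_sub (d q.2), div_neg, ← sub_eq_add_neg, div_sub_div_same]

end PairSums

theorem HasDerivAt.logDeriv_eq {𝕜 𝕜' : Type*} [NontriviallyNormedField 𝕜]
    [NontriviallyNormedField 𝕜'] [NormedAlgebra 𝕜 𝕜'] {f : 𝕜 → 𝕜'} {f' : 𝕜'} {x : 𝕜}
    (hf : HasDerivAt f f' x) : logDeriv f x = f' / f x := by
  rw [logDeriv_apply, hf.deriv]

theorem logDeriv_ofReal_comp {f : ℝ → ℝ} {x : ℝ} (hf : DifferentiableAt ℝ f x) :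
    logDeriv (fun p => (f p : ℂ)) x = logDeriv f x := by
  rw [hf.hasDerivAt.ofReal_comp.logDeriv_eq, hf.hasDerivAt.logDeriv_eq, Complex.ofReal_div]

section Vandermonde

variable {ι : Type*} [Fintype ι] [LinearOrder ι]

def vandermondeProd (x : ι → ℝ) : ℝ :=
  ∏ q ∈ univ.filter (fun q : ι × ι => q.1 < q.2), (x q.2 - x q.1)

theorem vandermondeProd_ne_zero {x : ι → ℝ} (hx : Function.Injective x) :
    vandermondeProd x ≠ 0 :=
  prod_ne_zero_iff.mpr fun _ hq => sub_ne_zero.mpr (hx.ne (mem_filter.mp hq).2.ne')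

theorem logDeriv_vandermondeProd {s : ℝ → ι → ℝ} {s' : ι → ℝ} {x : ℝ}
    (hs : HasDerivAt s s' x) (hinj : Function.Injective (s x)) :
    logDeriv (fun p => vandermondeProd (s p)) x =
      ∑ u, s' u * ∑ t ∈ univ.filter (· ≠ u), 1 / (s x u - s x t) := by
  have hcoord (t : ι) : HasDerivAt (fun p => s p t) (s' t) x := hasDerivAt_pi.mp hs t
  have hfactor (q : ι × ι) : HasDerivAt (fun p => s p q.2 - s p q.1) (s' q.2 - s' q.1) x :=
    (hcoord q.2).sub (hcoord q.1)
  unfold vandermondeProd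
  rw [logDeriv_prod (f := fun q p => s p q.2 - s p q.1)
    (fun q hq => sub_ne_zero.mpr (hinj.ne (mem_filter.mp hq).2.ne'))
    (fun q _ => (hfactor q).differentiableAt), ← sum_lt_sub_div_sub]
  exact sum_congr rfl fun q _ => (hfactor q).logDeriv_eq

theorem logDeriv_comp_div_vandermondeProd {A : (ι → ℝ) → ℂ} {y s : ℝ → ι → ℝ}
    {y' s' : ι → ℝ} {x : ℝ} (hA : DifferentiableAt ℝ A (y x)) (hAy : A (y x) ≠ 0)
    (hy : HasDerivAt y y' x) (hs : HasDerivAt s s' x) (hinj : Function.Injective (s x)) :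
    logDeriv (fun p => A (y p) / (vandermondeProd (s p) : ℂ)) x =
      fderiv ℝ A (y x) y' / A (y x) -
        ∑ u, (s' u : ℂ) * ∑ t ∈ univ.filter (· ≠ u), 1 / ((s x u : ℂ) - s x t) := by
  have hAy' : HasDerivAt (fun p => A (y p)) (fderiv ℝ A (y x) y') x :=
    hA.hasFDerivAt.comp_hasDerivAt x hy
  have hV : DifferentiableAt ℝ (fun p => vandermondeProd (s p)) x := by
    have := hs.differentiableAt
    unfold vandermondeProd
    fun_prop
  rw [logDeriv_div x (f := fun p => A (y p)) (g := fun p => (vandermondeProd (s p) : ℂ)) hAy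
      (Complex.ofReal_ne_zero.mpr (vandermondeProd_ne_zero hinj)) hAy'.differentiableAt
      hV.hasDerivAt.ofReal_comp.differentiableAt,
    hAy'.logDeriv_eq, logDeriv_ofReal_comp hV, logDeriv_vandermondeProd hs hinj]
  push_cast
  rfl

end Vandermonde

section PerturbedSpectrum

variable {ι : Type*} [DecidableEq ι]

/-- The eigenvalues of `diag d` after its `2 × 2` block at `a, b` is replaced by
`[[d a, x], [x', d b]]`, as functions of `r = 4 x x'`. -/
def perturbedSpectrum (d : ι → ℝ) (a b : ι) (r : ℝ) (t : ι) : ℝ :=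
  if t = a then (d a + d b + √((d a - d b) ^ 2 + r)) / 2
  else if t = b then (d a + d b - √((d a - d b) ^ 2 + r)) / 2
  else d t

variable {d : ι → ℝ} {a b : ι}

theorem perturbedSpectrum_zero (h : d b ≤ d a) : perturbedSpectrum d a b 0 = d := by
  have hsqrt : √((d a - d b) ^ 2 + 0) = d a - d b := by
    rw [add_zero, Real.sqrt_sq (sub_nonneg.mpr h)]
  ext t
  unfold perturbedSpectrum
  split_ifs with hta htb
  · rw [hsqrt, hta]; ring
  · rw [hsqrt, htb]; ring
  · rfl

theorem hasDerivAt_sqrt_sq_add {D : ℝ} (hD : 0 < D) :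
    HasDerivAt (fun r => √(D ^ 2 + r)) (2 * D)⁻¹ 0 := by
  have h := ((hasDerivAt_id (0 : ℝ)).const_add (D ^ 2)).sqrt (by simp [hD.ne'])
  simpa [Real.sqrt_sq hD.le] using h

theorem hasDerivAt_perturbedSpectrum (h : d b < d a) :
    HasDerivAt (perturbedSpectrum d a b)
      ((4 * (d a - d b))⁻¹ • (Pi.single a 1 - Pi.single b 1 : ι → ℝ)) 0 := by
  have hab : a ≠ b := fun hab => h.ne (by rw [hab])
  have hsqrt := hasDerivAt_sqrt_sq_add (sub_pos.mpr h)
  refine hasDerivAt_pi.mpr fun t => ?_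
  unfold perturbedSpectrum
  split_ifs with hta htb
  · refine ((hsqrt.const_add (d a + d b)).div_const 2).congr_deriv ?_
    rw [hta, Pi.smul_apply, Pi.sub_apply, Pi.single_eq_same, Pi.single_eq_of_ne hab, smul_eq_mul,
      mul_inv, mul_inv]
    ring
  · refine ((hsqrt.const_sub (d a + d b)).div_const 2).congr_deriv ?_
    rw [htb, Pi.smul_apply, Pi.sub_apply, Pi.single_eq_same, Pi.single_eq_of_ne hab.symm,
      smul_eq_mul, mul_inv, mul_inv]
    ring
  · simpa [Pi.single_apply, hta, htb] using hasDerivAt_const (0 : ℝ) (d t)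

end PerturbedSpectrum

theorem sum_smul_single_sub_single_mul {ι : Type*} [Fintype ι] [DecidableEq ι] (a b : ι)
    (δ : ℝ) (g : ι → ℂ) :
    ∑ u, (((δ • (Pi.single a 1 - Pi.single b 1) : ι → ℝ) u : ℝ) : ℂ) * g u =
      δ * (g a - g b) := by
  simp [Pi.single_apply, apply_ite Complex.ofReal, ite_mul, mul_sub, sub_mul, sum_sub_distrib]

theorem Function.Injective.of_sub_eq_div {ι : Type*} {d e : ι → ℝ} {c : ℝ} (hc : c ≠ 0)
    (h : ∀ u t, d u - d t = (e u - e t) / c) (he : Function.Injective e) :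
    Function.Injective d := fun u t hut => he <| by
  have := h u t
  rwa [hut, sub_self, eq_comm, div_eq_zero_iff, sub_eq_zero, or_iff_left hc] at this

theorem sum_one_div_sub_of_sub_eq_div {ι : Type*} {d e : ι → ℝ} {c : ℝ}
    (h : ∀ u t, d u - d t = (e u - e t) / c) (S : Finset ι) (u : ι) :
    ∑ t ∈ S, 1 / ((d u : ℂ) - d t) = c * ∑ t ∈ S, 1 / ((e u - e t : ℝ) : ℂ) := by
  rw [mul_sum]
  refine sum_congr rfl fun t _ => ?_
  rw [← Complex.ofReal_sub, h, Complex.ofReal_div, one_div_div, mul_one_div]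

theorem logDeriv_perturbedSpectrum_div_vandermondeProd {N : ℕ} {A : (Fin N → ℝ) → ℂ}
    {d : Fin N → ℝ} {a b : Fin N} (k μ : ℝ) (hA : DifferentiableAt ℝ A (μ • d))
    (hAd : A (μ • d) ≠ 0) (hd : Function.Injective d) (hab : d b < d a) :
    logDeriv (fun p => A (μ • perturbedSpectrum d a b (k * p)) /
        (vandermondeProd (perturbedSpectrum d a b (k * p)) : ℂ)) 0 =
      (k / (4 * (d a - d b)) : ℝ) * (μ * (pd a A (μ • d) - pd b A (μ • d)) / A (μ • d) -
        (∑ t ∈ univ.filter (· ≠ a), 1 / ((d a : ℂ) - d t) -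
          ∑ t ∈ univ.filter (· ≠ b), 1 / ((d b : ℂ) - d t))) := by
  have hk : HasDerivAt (fun p : ℝ => k * p) k 0 := by
    simpa using (hasDerivAt_id (0 : ℝ)).const_mul k
  have hspec : HasDerivAt (perturbedSpectrum d a b)
      ((4 * (d a - d b))⁻¹ • (Pi.single a 1 - Pi.single b 1)) (k * 0) := by
    rw [mul_zero]; exact hasDerivAt_perturbedSpectrum hab
  have hs : HasDerivAt (fun p => perturbedSpectrum d a b (k * p))
      ((k / (4 * (d a - d b))) • (Pi.single a 1 - Pi.single b 1)) 0 := by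
    refine (hspec.scomp 0 hk).congr_deriv ?_
    rw [smul_smul, div_eq_mul_inv]
  have hs0 : perturbedSpectrum d a b (k * 0) = d := by
    rw [mul_zero, perturbedSpectrum_zero hab.le]
  rw [logDeriv_comp_div_vandermondeProd (y := fun p => μ • perturbedSpectrum d a b (k * p))
      (by simpa only [hs0]) (by simpa only [hs0]) (hs.const_smul μ) hs (by simpa only [hs0]),
    hs0, sum_smul_single_sub_single_mul, smul_comm, map_smul, map_smul, map_sub]
  simp only [Complex.real_smul, pd]
  ring

theorem two_point_function_general {N : ℕ} (lam V κ ν : ℝ)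
    (hlκ : 0 < lam * κ) (hV : V ≠ 0) (hκ : κ ≠ 0)
    (E : Fin N → ℝ) (hE : ∀ i j, i ≠ j → E i ^ 2 ≠ E j ^ 2)
    (a b : Fin N) (hEba : E b ^ 2 < E a ^ 2)
    (d : Fin N → ℝ) (hd : ∀ t, d t = E t ^ 2 / (lam * κ) - 1)
    (z : Fin N → ℝ) (hz : ∀ k, z k = -V * E k ^ 2 / (ν * lam) + V * κ / ν)
    (A : (Fin N → ℝ) → ℂ) (hA : ContDiff ℝ 1 A) (hAz : A z ≠ 0)
    (s : ℝ → Fin N → ℝ)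
    (hs : ∀ p t, s p t =
      if t = a then
        (d a + d b + Real.sqrt ((d a - d b) ^ 2 + 4 * p / κ ^ 2)) / 2
      else if t = b then
        (d a + d b - Real.sqrt ((d a - d b) ^ 2 + 4 * p / κ ^ 2)) / 2
      else d t)
    (y : ℝ → Fin N → ℝ) (hy : ∀ p k, y p k = -V * κ * s p k / ν)
    (F : ℝ → ℂ)
    (hF : ∀ p, F p = A (y p) /
      ((∏ q ∈ Finset.univ.filter (fun q : Fin N × Fin N => q.1 < q.2),
          (s p q.2 - s p q.1) : ℝ) : ℂ)) :
    1 / (Complex.I * (V : ℂ)) * deriv F 0 / F 0 =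
      -((lam : ℂ) ^ 2 / (Complex.I * (V : ℂ))) *
          ∑ i ∈ Finset.univ.filter (fun i => i ≠ a),
            1 / (((E a ^ 2 - E i ^ 2 : ℝ) : ℂ) * ((E a ^ 2 - E b ^ 2 : ℝ) : ℂ)) +
        (lam : ℂ) ^ 2 / (Complex.I * (V : ℂ)) *
          ∑ i ∈ Finset.univ.filter (fun i => i ≠ b),
            1 / (((E b ^ 2 - E i ^ 2 : ℝ) : ℂ) * ((E a ^ 2 - E b ^ 2 : ℝ) : ℂ)) -
        (lam : ℂ) / (Complex.I * (ν : ℂ)) * (1 / ((E a ^ 2 - E b ^ 2 : ℝ) : ℂ)) *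
          pd a A z / A z +
        (lam : ℂ) / (Complex.I * (ν : ℂ)) * (1 / ((E a ^ 2 - E b ^ 2 : ℝ) : ℂ)) *
          pd b A z / A z := by
  have hdiff (u t : Fin N) : d u - d t = (E u ^ 2 - E t ^ 2) / (lam * κ) := by
    rw [hd, hd]; ring
  have hdab : d b < d a := by
    rw [← sub_pos, hdiff]; exact div_pos (sub_pos.mpr hEba) hlκ
  have hinj : Function.Injective d := .of_sub_eq_div hlκ.ne' hdiff
    fun u t hut => by_contra fun hne => hE u t hne hut
  have hF' : F = fun p => A ((-V * κ / ν) • perturbedSpectrum d a b (4 / κ ^ 2 * p)) /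
      (vandermondeProd (perturbedSpectrum d a b (4 / κ ^ 2 * p)) : ℂ) := by
    have hs' (p : ℝ) : s p = perturbedSpectrum d a b (4 / κ ^ 2 * p) := by
      funext t; rw [hs, perturbedSpectrum, div_mul_eq_mul_div]
    have hy' (p : ℝ) : y p = (-V * κ / ν) • s p := by
      funext k; rw [hy, Pi.smul_apply, smul_eq_mul]; ring
    funext p; rw [hF, hy', hs']; rfl
  have hz' : (-V * κ / ν) • d = z := by
    funext k; rw [Pi.smul_apply, smul_eq_mul, hz, hd]; field_simp; ring
  have hδ : 4 / κ ^ 2 / (4 * (d a - d b)) = lam / (κ * (E a ^ 2 - E b ^ 2)) := by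
    rw [hdiff]; field_simp
  rw [mul_div_assoc, ← logDeriv_apply, hF', logDeriv_perturbedSpectrum_div_vandermondeProd _ _
    (hz' ▸ hA.differentiable one_ne_zero z) (hz' ▸ hAz) hinj hdab, hz', hδ,
    sum_one_div_sub_of_sub_eq_div hdiff, sum_one_div_sub_of_sub_eq_div hdiff]
  simp only [div_mul_eq_div_div (1 : ℂ), ← sum_div, Complex.ofReal_div, Complex.ofReal_mul,
    Complex.ofReal_neg]
  have hX : ((E a ^ 2 - E b ^ 2 : ℝ) : ℂ) ≠ 0 :=
    Complex.ofReal_ne_zero.mpr (sub_pos.mpr hEba).ne'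
  have hκ' : (κ : ℂ) ≠ 0 := Complex.ofReal_ne_zero.mpr hκ
  have hV' : (V : ℂ) ≠ 0 := Complex.ofReal_ne_zero.mpr hV
  generalize ((E a ^ 2 - E b ^ 2 : ℝ) : ℂ) = X at hX ⊢
  field_simp
  ring

/-- **The 2-point function `G_{|ab|}` of the `Φ³₂` matrix model.**
With the eigenvalue-parametrized family `F(p) = A(y(p)) / ∏_{t<u}(s_u(p) − s_t(p))`,
`G_{|ab|} = (1/(iV)) F′(0)/F(0)
  = −(λ²/(iV)) Σ_{i≠a} 1/((E_a²−E_i²)(E_a²−E_b²))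
    + (λ²/(iV)) Σ_{i≠b} 1/((E_b²−E_i²)(E_a²−E_b²))
    − (λ/(iν)) (∂_a A)(z)/((E_a²−E_b²) A(z)) + (λ/(iν)) (∂_b A)(z)/((E_a²−E_b²) A(z))`. -/
theorem two_point_function {N : ℕ} (lam V κ ν : ℝ)
    (hlκ : 0 < lam * κ) (hlam : lam ≠ 0) (hV : V ≠ 0) (hκ : κ ≠ 0)
    (hν : ν ^ 3 = lam * V)
    (E : Fin N → ℝ) (hE : ∀ i j, i ≠ j → E i ^ 2 ≠ E j ^ 2)
    (a b : Fin N) (hba : b < a) (hEba : E b ^ 2 < E a ^ 2)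
    (d : Fin N → ℝ) (hd : ∀ t, d t = E t ^ 2 / (lam * κ) - 1)
    (z : Fin N → ℝ) (hz : ∀ k, z k = -V * E k ^ 2 / (ν * lam) + V * κ / ν)
    (A : (Fin N → ℝ) → ℂ) (hA : ContDiff ℝ 1 A) (hAz : A z ≠ 0)
    (s : ℝ → Fin N → ℝ)
    (hs : ∀ p t, s p t =
      if t = a then
        (d a + d b + Real.sqrt ((d a - d b) ^ 2 + 4 * p / κ ^ 2)) / 2
      else if t = b then
        (d a + d b - Real.sqrt ((d a - d b) ^ 2 + 4 * p / κ ^ 2)) / 2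
      else d t)
    (y : ℝ → Fin N → ℝ) (hy : ∀ p k, y p k = -V * κ * s p k / ν)
    (F : ℝ → ℂ)
    (hF : ∀ p, F p = A (y p) /
      ((∏ q ∈ Finset.univ.filter (fun q : Fin N × Fin N => q.1 < q.2),
          (s p q.2 - s p q.1) : ℝ) : ℂ)) :
    1 / (Complex.I * (V : ℂ)) * deriv F 0 / F 0 =
      -((lam : ℂ) ^ 2 / (Complex.I * (V : ℂ))) *
          ∑ i ∈ Finset.univ.filter (fun i => i ≠ a),
            1 / (((E a ^ 2 - E i ^ 2 : ℝ) : ℂ) * ((E a ^ 2 - E b ^ 2 : ℝ) : ℂ)) +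
        (lam : ℂ) ^ 2 / (Complex.I * (V : ℂ)) *
          ∑ i ∈ Finset.univ.filter (fun i => i ≠ b),
            1 / (((E b ^ 2 - E i ^ 2 : ℝ) : ℂ) * ((E a ^ 2 - E b ^ 2 : ℝ) : ℂ)) -
        (lam : ℂ) / (Complex.I * (ν : ℂ)) * (1 / ((E a ^ 2 - E b ^ 2 : ℝ) : ℂ)) *
          pd a A z / A z +
        (lam : ℂ) / (Complex.I * (ν : ℂ)) * (1 / ((E a ^ 2 - E b ^ 2 : ℝ) : ℂ)) *
          pd b A z / A z :=
  two_point_function_general lam V κ ν hlκ hV hκ E hE a b hEba d hd z hz A hA hAz s hs y hy F hF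
end
end

section
/- For all a ≠ b in Fin N, the Schwinger–Dyson equation G_{ab} = (1/(E_a + E_b)) · (1 + λ·(G_a − G_b)/(E_a − E_b)) holds, where G_a and G_{ab} are defined by the explicit 1-point and 2-point formulas below. -/
noncomputable section

open Finset

set_option maxHeartbeats 1600000

/-- **Schwinger–Dyson equation relating the 1- and 2-point functions of the `Φ³₂`
matrix model.** With the explicit formulas
`G_a = −E_a/λ − (λ/(iV)) Σ_{i≠a} 1/(E_a²−E_i²) − (1/(iν)) ℓ_a` and
`G_{ab} = −(λ²/(iV)) Σ_{i≠a} 1/((E_a²−E_i²)(E_a²−E_b²))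
          + (λ²/(iV)) Σ_{i≠b} 1/((E_b²−E_i²)(E_a²−E_b²)) − (λ/(iν)) (ℓ_a−ℓ_b)/(E_a²−E_b²)`,
for all `a ≠ b` one has `G_{ab} = (1/(E_a+E_b)) (1 + λ (G_a − G_b)/(E_a − E_b))`. -/
theorem schwinger_dyson_two_point {N : ℕ} (lam V ν : ℝ)
    (hlam : lam ≠ 0) (hV : V ≠ 0) (hν : ν ^ 3 = lam * V)
    (E : Fin N → ℝ) (hEpos : ∀ i, 0 < E i) (hE : Function.Injective E)
    (ℓ : Fin N → ℂ)
    (G₁ : Fin N → ℂ)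
    (hG₁ : ∀ a, G₁ a =
      -(E a : ℂ) / (lam : ℂ) -
        (lam : ℂ) / (Complex.I * (V : ℂ)) *
          ∑ i ∈ Finset.univ.filter (fun i => i ≠ a),
            1 / ((E a ^ 2 - E i ^ 2 : ℝ) : ℂ) -
        1 / (Complex.I * (ν : ℂ)) * ℓ a)
    (G₂ : Fin N → Fin N → ℂ)
    (hG₂ : ∀ a b, a ≠ b → G₂ a b =
      -((lam : ℂ) ^ 2 / (Complex.I * (V : ℂ))) *
          ∑ i ∈ Finset.univ.filter (fun i => i ≠ a),
            1 / (((E a ^ 2 - E i ^ 2 : ℝ) : ℂ) * ((E a ^ 2 - E b ^ 2 : ℝ) : ℂ)) +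
        (lam : ℂ) ^ 2 / (Complex.I * (V : ℂ)) *
          ∑ i ∈ Finset.univ.filter (fun i => i ≠ b),
            1 / (((E b ^ 2 - E i ^ 2 : ℝ) : ℂ) * ((E a ^ 2 - E b ^ 2 : ℝ) : ℂ)) -
        (lam : ℂ) / (Complex.I * (ν : ℂ)) * (ℓ a - ℓ b) / ((E a ^ 2 - E b ^ 2 : ℝ) : ℂ)) :
    ∀ a b, a ≠ b →
      G₂ a b =
        1 / ((E a : ℂ) + (E b : ℂ)) *
          (1 + (lam : ℂ) * (G₁ a - G₁ b) / ((E a : ℂ) - (E b : ℂ))) := by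
  intro a b hab
  have hEa := hEpos a
  have hEb := hEpos b
  have hne : E a ≠ E b := fun h => hab (hE h)
  have hsub : (E a : ℂ) - (E b : ℂ) ≠ 0 := by
    rw [sub_ne_zero]; exact_mod_cast hne
  have hadd : (E a : ℂ) + (E b : ℂ) ≠ 0 := by
    have : (0:ℝ) < E a + E b := by linarith
    exact_mod_cast ne_of_gt this
  have hν0 : (ν : ℂ) ≠ 0 := by
    have : ν ≠ 0 := by
      intro h; apply mul_ne_zero hlam hV; rw [← hν, h]; ring
    exact_mod_cast this
  have hlam' : (lam : ℂ) ≠ 0 := by exact_mod_cast hlam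
  have hV' : (V : ℂ) ≠ 0 := by exact_mod_cast hV
  rw [hG₂ a b hab]
  have hsum : ∀ c : Fin N,
      ∑ i ∈ Finset.univ.filter (fun i => i ≠ c),
        1 / (((E c ^ 2 - E i ^ 2 : ℝ) : ℂ) * ((E a ^ 2 - E b ^ 2 : ℝ) : ℂ)) =
      (∑ i ∈ Finset.univ.filter (fun i => i ≠ c),
        1 / ((E c ^ 2 - E i ^ 2 : ℝ) : ℂ)) / ((E a ^ 2 - E b ^ 2 : ℝ) : ℂ) := by
    intro c
    rw [Finset.sum_div]
    exact Finset.sum_congr rfl fun i _ => by rw [div_mul_eq_div_div]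
  rw [hsum a, hsum b]
  set Sa := ∑ i ∈ Finset.univ.filter (fun i => i ≠ a), 1 / ((E a ^ 2 - E i ^ 2 : ℝ) : ℂ) with hSa
  set Sb := ∑ i ∈ Finset.univ.filter (fun i => i ≠ b), 1 / ((E b ^ 2 - E i ^ 2 : ℝ) : ℂ) with hSb
  have hD' : ((E a ^ 2 - E b ^ 2 : ℝ) : ℂ) = ((E a : ℂ) - E b) * ((E a : ℂ) + E b) := by
    push_cast; ring
  rw [hD']
  have hI : Complex.I ≠ 0 := Complex.I_ne_zero
  have hΔ : (lam : ℂ) * (G₁ a - G₁ b) =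
      -(((E a : ℂ) - E b)) - (lam : ℂ) ^ 2 / (Complex.I * (V : ℂ)) * (Sa - Sb) -
        (lam : ℂ) / (Complex.I * (ν : ℂ)) * (ℓ a - ℓ b) := by
    rw [hG₁ a, hG₁ b, ← hSa, ← hSb]
    field_simp
    ring
  rw [hΔ]
  have h1 : (1 : ℂ) +
      (-(((E a : ℂ) - E b)) - (lam : ℂ) ^ 2 / (Complex.I * (V : ℂ)) * (Sa - Sb) -
        (lam : ℂ) / (Complex.I * (ν : ℂ)) * (ℓ a - ℓ b)) / ((E a : ℂ) - (E b : ℂ)) =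
      -((lam : ℂ) ^ 2 / (Complex.I * (V : ℂ)) * (Sa - Sb) / ((E a : ℂ) - (E b : ℂ))) -
        (lam : ℂ) / (Complex.I * (ν : ℂ)) * (ℓ a - ℓ b) / ((E a : ℂ) - (E b : ℂ)) := by
    rw [show -(((E a : ℂ) - E b)) - (lam : ℂ) ^ 2 / (Complex.I * (V : ℂ)) * (Sa - Sb) -
        (lam : ℂ) / (Complex.I * (ν : ℂ)) * (ℓ a - ℓ b) =
        -(((E a : ℂ) - E b)) - ((lam : ℂ) ^ 2 / (Complex.I * (V : ℂ)) * (Sa - Sb) +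
          (lam : ℂ) / (Complex.I * (ν : ℂ)) * (ℓ a - ℓ b)) from by ring,
      sub_div, neg_div, div_self hsub]
    ring
  rw [h1]
  simp only [div_mul_eq_div_div]
  ring
end
end

section
/- Let N ∈ ℕ, f : ℝ → ℂ measurable, c ∈ ℂ, and s : Fin N → ℂ. Assume that for every permutation σ of Fin N the function x ↦ (∏_{i} f(x_i)) · (∏_{k<l} (x_l − x_k)) · ∏_{j} exp(c · x_{σ(j)} · s_j) is Bochner integrable on ℝ^N (with Lebesgue measure). Then ∫_{ℝ^N} (∏_i f(x_i)) · (∏_{k<l}(x_l − x_k)) · det_{1≤m,n≤N}( exp(c · x_m · s_n) ) dx = N! · ∫_{ℝ^N} (∏_i f(x_i) · exp(c · x_i · s_i)) · (∏_{k<l}(x_l − x_k)) dx. -/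
open Finset MeasureTheory

/-!
Write the integrand as `A x * det (e (x m) n)` with `A x = (∏ f (x i)) · Δ(x)`; since `Δ` is the
Vandermonde determinant, `A (x ∘ σ) = sign σ · A x`. By the Leibniz formula the integral is
`∑_σ sign σ ∫ A x ∏_j e (x (σ j)) j`, and the substitution `x ↦ x ∘ σ`, which preserves the
product measure, turns each term into `sign σ ^ 2 ∫ A x ∏_j e (x j) j`: all `N!` terms coincide.
-/

theorem integral_comp_perm {ι α E : Type*} [Fintype ι] [MeasurableSpace α] (μ : Measure α)
    [SigmaFinite μ] [NormedAddCommGroup E] [NormedSpace ℝ E] (σ : Equiv.Perm ι)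
    (g : (ι → α) → E) :
    ∫ x, g (x ∘ σ) ∂Measure.pi (fun _ => μ) = ∫ x, g x ∂Measure.pi (fun _ => μ) :=
  (measurePreserving_piCongrLeft (fun _ => μ) σ).symm.integral_comp' g

theorem prod_filter_lt_sub_eq_det_vandermonde {R : Type*} [CommRing R] {n : ℕ} (x : Fin n → R) :
    ∏ q ∈ univ.filter (fun q : Fin n × Fin n => q.1 < q.2), (x q.2 - x q.1) =
      (Matrix.vandermonde x).det := by
  rw [Matrix.det_vandermonde, prod_filter, ← univ_product_univ, prod_product]
  refine prod_congr rfl fun i _ => ?_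
  rw [← prod_filter]
  congr 1
  ext j
  simp

theorem prod_filter_lt_sub_comp_perm {R : Type*} [CommRing R] {n : ℕ} (x : Fin n → R)
    (σ : Equiv.Perm (Fin n)) :
    ∏ q ∈ univ.filter (fun q : Fin n × Fin n => q.1 < q.2), (x (σ q.2) - x (σ q.1)) =
      (Equiv.Perm.sign σ : R) *
        ∏ q ∈ univ.filter (fun q : Fin n × Fin n => q.1 < q.2), (x q.2 - x q.1) := by
  rw [prod_filter_lt_sub_eq_det_vandermonde, ← Matrix.det_permute]
  exact prod_filter_lt_sub_eq_det_vandermonde (x ∘ σ)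

theorem Int.cast_units_mul_self {R : Type*} [Ring R] (u : ℤˣ) : (u : R) * u = 1 := by
  rw [← Int.cast_mul, ← Units.val_mul, Int.units_mul_self, Units.val_one, Int.cast_one]

section Antisymmetrization

variable {ι α 𝕜 : Type*} [Fintype ι] [DecidableEq ι] [MeasurableSpace α] {μ : Measure α}
  [SigmaFinite μ] [RCLike 𝕜]

theorem integral_mul_prod_comp_perm_of_antisymm {A : (ι → α) → 𝕜}
    (hA : ∀ (σ : Equiv.Perm ι) x, A (x ∘ σ) = (Equiv.Perm.sign σ : 𝕜) * A x) (e : α → ι → 𝕜)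
    (σ : Equiv.Perm ι) :
    ∫ x, A x * ∏ j, e (x (σ j)) j ∂Measure.pi (fun _ => μ) =
      (Equiv.Perm.sign σ : 𝕜) * ∫ x, A x * ∏ j, e (x j) j ∂Measure.pi (fun _ => μ) := by
  have h_pointwise : ∀ x : ι → α, A x * ∏ j, e (x (σ j)) j =
      (Equiv.Perm.sign σ : 𝕜) * (A (x ∘ σ) * ∏ j, e ((x ∘ σ) j) j) := by
    intro x
    rw [hA, ← mul_assoc, ← mul_assoc, Int.cast_units_mul_self, one_mul]
    rfl
  simp_rw [h_pointwise, integral_const_mul]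
  rw [integral_comp_perm μ σ (fun x => A x * ∏ j, e (x j) j)]

theorem integral_mul_det_of_antisymm {A : (ι → α) → 𝕜}
    (hA : ∀ (σ : Equiv.Perm ι) x, A (x ∘ σ) = (Equiv.Perm.sign σ : 𝕜) * A x) (e : α → ι → 𝕜)
    (hint : ∀ σ : Equiv.Perm ι,
      Integrable (fun x => A x * ∏ j, e (x (σ j)) j) (Measure.pi fun _ => μ)) :
    ∫ x, A x * (Matrix.of fun m n => e (x m) n).det ∂Measure.pi (fun _ => μ) =
      (Fintype.card ι).factorial * ∫ x, A x * ∏ j, e (x j) j ∂Measure.pi (fun _ => μ) := by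
  have h_expand : ∀ x : ι → α, A x * (Matrix.of fun m n => e (x m) n).det =
      ∑ σ : Equiv.Perm ι, (Equiv.Perm.sign σ : 𝕜) * (A x * ∏ j, e (x (σ j)) j) := by
    intro x
    simp only [Matrix.det_apply, Matrix.of_apply, mul_sum, Units.smul_def, zsmul_eq_mul]
    exact sum_congr rfl fun σ _ => by ring
  calc ∫ x, A x * (Matrix.of fun m n => e (x m) n).det ∂Measure.pi (fun _ => μ)
      = ∑ σ : Equiv.Perm ι, (Equiv.Perm.sign σ : 𝕜) *
          ∫ x, A x * ∏ j, e (x (σ j)) j ∂Measure.pi (fun _ => μ) := by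
        simp_rw [h_expand]
        rw [integral_finsetSum _ fun σ _ => (hint σ).const_mul _]
        simp_rw [integral_const_mul]
    _ = ∑ _σ : Equiv.Perm ι, ∫ x, A x * ∏ j, e (x j) j ∂Measure.pi (fun _ => μ) := by
        simp_rw [integral_mul_prod_comp_perm_of_antisymm hA, ← mul_assoc,
          Int.cast_units_mul_self, one_mul]
    _ = _ := by
        rw [sum_const, card_univ, Fintype.card_perm, nsmul_eq_mul]

end Antisymmetrization

theorem det_integral_perm_symmetry_general (N : ℕ) (f : ℝ → ℂ)
    (c : ℂ) (s : Fin N → ℂ)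
    (hint : ∀ σ : Equiv.Perm (Fin N),
      Integrable (fun x : Fin N → ℝ =>
        (∏ i, f (x i)) *
          ((∏ q ∈ Finset.univ.filter (fun q : Fin N × Fin N => q.1 < q.2),
              (x q.2 - x q.1) : ℝ) : ℂ) *
          ∏ j, Complex.exp (c * ((x (σ j) : ℝ) : ℂ) * s j)) volume) :
    ∫ x : Fin N → ℝ,
        (∏ i, f (x i)) *
          ((∏ q ∈ Finset.univ.filter (fun q : Fin N × Fin N => q.1 < q.2),
              (x q.2 - x q.1) : ℝ) : ℂ) *
          Matrix.det (Matrix.of fun m n : Fin N =>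
            Complex.exp (c * ((x m : ℝ) : ℂ) * s n)) =
      (N.factorial : ℂ) *
        ∫ x : Fin N → ℝ,
          (∏ i, f (x i) * Complex.exp (c * ((x i : ℝ) : ℂ) * s i)) *
            ((∏ q ∈ Finset.univ.filter (fun q : Fin N × Fin N => q.1 < q.2),
                (x q.2 - x q.1) : ℝ) : ℂ) := by
  have h_antisymm : ∀ (σ : Equiv.Perm (Fin N)) (x : Fin N → ℝ),
      (∏ i, f ((x ∘ σ) i)) *
          ((∏ q ∈ univ.filter (fun q : Fin N × Fin N => q.1 < q.2),
            ((x ∘ σ) q.2 - (x ∘ σ) q.1) : ℝ) : ℂ) =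
        (Equiv.Perm.sign σ : ℂ) * ((∏ i, f (x i)) *
          ((∏ q ∈ univ.filter (fun q : Fin N × Fin N => q.1 < q.2), (x q.2 - x q.1) : ℝ) : ℂ)) := by
    intro σ x
    simp only [Function.comp_apply, prod_filter_lt_sub_comp_perm,
      Equiv.prod_comp σ (fun i => f (x i))]
    push_cast
    ring
  have h_reduction :=
    integral_mul_det_of_antisymm h_antisymm (fun (t : ℝ) j => Complex.exp (c * t * s j)) hint
  rw [Fintype.card_fin] at h_reduction
  refine h_reduction.trans (congrArg _ (integral_congr_ae (.of_forall fun x => ?_)))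
  simp only [prod_mul_distrib]
  ring

/-- **Permutation-symmetry reduction of the HCIZ determinant integral.**
If for every permutation `σ` the function
`x ↦ (∏_i f(x_i)) (∏_{k<l}(x_l − x_k)) ∏_j exp(c x_{σ(j)} s_j)` is integrable on `ℝ^N`,
then
`∫ (∏_i f(x_i)) (∏_{k<l}(x_l−x_k)) det(exp(c x_m s_n)) dx
  = N! ∫ (∏_i f(x_i) exp(c x_i s_i)) (∏_{k<l}(x_l−x_k)) dx`. -/
theorem det_integral_perm_symmetry (N : ℕ) (f : ℝ → ℂ) (hf : Measurable f)
    (c : ℂ) (s : Fin N → ℂ)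
    (hint : ∀ σ : Equiv.Perm (Fin N),
      Integrable (fun x : Fin N → ℝ =>
        (∏ i, f (x i)) *
          ((∏ q ∈ Finset.univ.filter (fun q : Fin N × Fin N => q.1 < q.2),
              (x q.2 - x q.1) : ℝ) : ℂ) *
          ∏ j, Complex.exp (c * ((x (σ j) : ℝ) : ℂ) * s j)) volume) :
    ∫ x : Fin N → ℝ,
        (∏ i, f (x i)) *
          ((∏ q ∈ Finset.univ.filter (fun q : Fin N × Fin N => q.1 < q.2),
              (x q.2 - x q.1) : ℝ) : ℂ) *
          Matrix.det (Matrix.of fun m n : Fin N =>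
            Complex.exp (c * ((x m : ℝ) : ℂ) * s n)) =
      (N.factorial : ℂ) *
        ∫ x : Fin N → ℝ,
          (∏ i, f (x i) * Complex.exp (c * ((x i : ℝ) : ℂ) * s i)) *
            ((∏ q ∈ Finset.univ.filter (fun q : Fin N × Fin N => q.1 < q.2),
                (x q.2 - x q.1) : ℝ) : ℂ) :=
  det_integral_perm_symmetry_general N f c s hint
end

section
/- Let N ∈ ℕ, f : ℝ → ℂ measurable, c ∈ ℂ, and s : Fin N → ℂ. Assume that for all k, j ∈ {1,…,N} the function x ↦ x^{k−1} · f(x) · exp(c·x·s_j) is Bochner integrable on ℝ, and that the function x ↦ (∏_i f(x_i) · exp(c·x_i·s_i)) · ∏_{k<l}(x_l − x_k) is Bochner integrable on ℝ^N. Define φ_k(z) = ∫_ℝ x^{k−1} · f(x) · exp(c·x·z) dx for z among the s_j. Then ∫_{ℝ^N} (∏_i f(x_i)·exp(c·x_i·s_i)) · ∏_{k<l}(x_l − x_k) dx = det_{1≤i,j≤N}( φ_i(s_j) ). -/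
/-!
Writing the Vandermonde product as `det (x_j ^ k)` and absorbing the factors `f (x_j) exp (c x_j s_j)`
into the columns, the integrand becomes a determinant whose `j`-th column depends on `x_j` alone.
In the Leibniz expansion every term is then a product of one-variable functions, so by Fubini
its integral is the product of the one-variable integrals, and these reassemble into
`det (φ_i (s_j))` (Andréief's identity).
-/

open Finset MeasureTheory Matrix

theorem Finset.prod_filter_fst_lt_snd {ι M : Type*} [Fintype ι] [LinearOrder ι]
    [LocallyFiniteOrderTop ι] [CommMonoid M] (g : ι → ι → M) :
    ∏ q ∈ univ.filter (fun q : ι × ι => q.1 < q.2), g q.1 q.2 = ∏ i, ∏ j ∈ Ioi i, g i j := by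
  rw [prod_filter, Fintype.prod_prod_type]
  refine prod_congr rfl fun i _ => ?_
  rw [← prod_filter]
  congr 1
  ext j
  simp

theorem Matrix.det_vandermonde_eq_prod_filter_lt {R : Type*} [CommRing R] {n : ℕ}
    (v : Fin n → R) :
    det (vandermonde v) =
      ∏ q ∈ univ.filter (fun q : Fin n × Fin n => q.1 < q.2), (v q.2 - v q.1) := by
  rw [det_vandermonde, prod_filter_fst_lt_snd (fun i j => v j - v i)]

theorem Matrix.det_of_pow_mul {R : Type*} [CommRing R] {n : ℕ} (v d : Fin n → R) :
    det (of fun k j : Fin n => v j ^ (k : ℕ) * d j) = (∏ j, d j) * det (vandermonde v) := by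
  have h : of (fun k j : Fin n => v j ^ (k : ℕ) * d j) = (vandermonde v)ᵀ * diagonal d := by
    ext k j
    simp
  rw [h, det_mul, det_transpose, det_diagonal, mul_comm]

theorem MeasureTheory.integral_det_of_apply {ι E 𝕜 : Type*} [Fintype ι] [DecidableEq ι]
    [RCLike 𝕜] [MeasurableSpace E] (μ : Measure E) [SigmaFinite μ] (g : ι → ι → E → 𝕜)
    (hg : ∀ k j, Integrable (g k j) μ) :
    ∫ x, det (of fun k j => g k j (x j)) ∂(Measure.pi fun _ => μ) =
      det (of fun k j => ∫ t, g k j t ∂μ) := by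
  have integrable_term : ∀ σ : Equiv.Perm ι,
      Integrable (fun x : ι → E => (Equiv.Perm.sign σ : 𝕜) * ∏ j, g (σ j) j (x j))
        (Measure.pi fun _ => μ) :=
    fun σ => (Integrable.fintype_prod (fun j => hg (σ j) j)).const_mul _
  simp_rw [det_apply', of_apply]
  rw [integral_finsetSum _ fun σ _ => integrable_term σ]
  refine sum_congr rfl fun σ _ => ?_
  rw [integral_const_mul, integral_fintype_prod_eq_prod]

theorem integral_eq_det_moments_general (N : ℕ) (f : ℝ → ℂ)
    (c : ℂ) (s : Fin N → ℂ)
    (φ : Fin N → ℂ → ℂ)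
    (hφ : ∀ (k : Fin N) (z : ℂ),
      φ k z = ∫ x : ℝ, ((x : ℂ)) ^ (k : ℕ) * f x * Complex.exp (c * (x : ℂ) * z))
    (hint1 : ∀ k j : Fin N,
      Integrable (fun x : ℝ =>
        ((x : ℂ)) ^ (k : ℕ) * f x * Complex.exp (c * (x : ℂ) * s j)) volume) :
    ∫ x : Fin N → ℝ,
        (∏ i, f (x i) * Complex.exp (c * ((x i : ℝ) : ℂ) * s i)) *
          ((∏ q ∈ Finset.univ.filter (fun q : Fin N × Fin N => q.1 < q.2),
              (x q.2 - x q.1) : ℝ) : ℂ) =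
      Matrix.det (Matrix.of fun i j : Fin N => φ i (s j)) := by
  have integrand_eq_det : ∀ x : Fin N → ℝ,
      (∏ i, f (x i) * Complex.exp (c * ((x i : ℝ) : ℂ) * s i)) *
          ((∏ q ∈ Finset.univ.filter (fun q : Fin N × Fin N => q.1 < q.2),
              (x q.2 - x q.1) : ℝ) : ℂ) =
        det (of fun k j : Fin N =>
          ((x j : ℝ) : ℂ) ^ (k : ℕ) * f (x j) * Complex.exp (c * ((x j : ℝ) : ℂ) * s j)) := by
    intro x
    push_cast
    rw [← det_vandermonde_eq_prod_filter_lt (fun i => ((x i : ℝ) : ℂ)), ← det_of_pow_mul]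
    simp only [mul_assoc]
  simp_rw [integrand_eq_det]
  rw [volume_pi, integral_det_of_apply volume _ hint1]
  simp only [hφ]

/-- **The multi-dimensional integral as a determinant of moment integrals.**
With `φ_k(z) = ∫_ℝ x^{k−1} f(x) exp(c x z) dx`, under the stated integrability
hypotheses,
`∫_{ℝ^N} (∏_i f(x_i) exp(c x_i s_i)) ∏_{k<l}(x_l − x_k) dx = det(φ_i(s_j))`. -/
theorem integral_eq_det_moments (N : ℕ) (f : ℝ → ℂ) (hf : Measurable f)
    (c : ℂ) (s : Fin N → ℂ)
    (φ : Fin N → ℂ → ℂ)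
    (hφ : ∀ (k : Fin N) (z : ℂ),
      φ k z = ∫ x : ℝ, ((x : ℂ)) ^ (k : ℕ) * f x * Complex.exp (c * (x : ℂ) * z))
    (hint1 : ∀ k j : Fin N,
      Integrable (fun x : ℝ =>
        ((x : ℂ)) ^ (k : ℕ) * f x * Complex.exp (c * (x : ℂ) * s j)) volume)
    (hint2 : Integrable (fun x : Fin N → ℝ =>
      (∏ i, f (x i) * Complex.exp (c * ((x i : ℝ) : ℂ) * s i)) *
        ((∏ q ∈ Finset.univ.filter (fun q : Fin N × Fin N => q.1 < q.2),
            (x q.2 - x q.1) : ℝ) : ℂ)) volume) :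
    ∫ x : Fin N → ℝ,
        (∏ i, f (x i) * Complex.exp (c * ((x i : ℝ) : ℂ) * s i)) *
          ((∏ q ∈ Finset.univ.filter (fun q : Fin N × Fin N => q.1 < q.2),
              (x q.2 - x q.1) : ℝ) : ℂ) =
      Matrix.det (Matrix.of fun i j : Fin N => φ i (s j)) :=
  integral_eq_det_moments_general N f c s φ hφ hint1
end
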